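/- Given a finite sequence of users sorted greedily by decreasing marginal density V_i(S_{i−1})/b_i for a monotone submodular function V, if the greedy proportional-share rule with budget B'/2 selects the first l users and with budget B' selects the first k users (l ≤ k), then V(S_l) ≥ V(S_k)/2. -/

import Mathlib

/-!
Sorting makes the marginal densities `dᵢ = (V(Sᵢ) - V(Sᵢ₋₁)) / bᵢ` non-increasing, so since
`l < k` the stopping conditions chain together:
`V(S_k)/B' ≤ d_k ≤ d_{l+1} ≤ 2 V(S_l)/B'`.
-/

theorem proportional_share_half_budget_general (n : ℕ)
    (V : Finset (Fin n) → ℝ) (b : ℕ → ℝ) (B' : ℝ)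
    (S : ℕ → Finset (Fin n))
    (hB : 0 < B')
    (l k : ℕ) (hlk : l < k) (hkn : k ≤ n)
    -- marginal densities are non-increasing
    (hsort : ∀ i, 1 ≤ i → i < n →
      (V (S (i + 1)) - V (S i)) / b (i + 1) ≤ (V (S i) - V (S (i - 1))) / b i)
    (hl2 : (V (S (l + 1)) - V (S l)) / b (l + 1) ≤ 2 * V (S l) / B')
    -- k is the stopping index for budget B'
    (hk1 : V (S k) / B' ≤ (V (S k) - V (S (k - 1))) / b k) :
    V (S k) / 2 ≤ V (S l) := by
  set density : ℕ → ℝ := fun i ↦ (V (S i) - V (S (i - 1))) / b i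
  have hanti : AntitoneOn density (Set.Icc 1 n) :=
    antitoneOn_of_add_one_le Set.ordConnected_Icc fun i _ hi hi' ↦ hsort i hi.1 hi'.2
  have hdensity : density k ≤ density (l + 1) :=
    hanti ⟨by omega, by omega⟩ ⟨by omega, hkn⟩ hlk
  have hchain : V (S k) / B' ≤ 2 * V (S l) / B' := hk1.trans (hdensity.trans hl2)
  linarith [(div_le_div_iff_of_pos_right hB).mp hchain]

/-- Greedy proportional-share with budget `B'/2` selecting the first `l` users and with
budget `B'` selecting the first `k` users yields `V(S_l) ≥ V(S_k)/2`. -/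
theorem proportional_share_half_budget (n : ℕ)
    (V : Finset (Fin n) → ℝ) (b : ℕ → ℝ) (B' : ℝ)
    (S : ℕ → Finset (Fin n))
    (hS : ∀ i : ℕ, S i = Finset.univ.filter (fun x : Fin n => (x : ℕ) < i))
    (hV0 : V ∅ = 0)
    (hmono : ∀ A B : Finset (Fin n), A ⊆ B → V A ≤ V B)
    (hsubmod : ∀ (X Y : Finset (Fin n)) (x : Fin n), X ⊆ Y → x ∉ Y →
      V (insert x Y) - V Y ≤ V (insert x X) - V X)
    (hb : ∀ i, 0 < b i) (hB : 0 < B')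
    (l k : ℕ) (hl : 1 ≤ l) (hlk : l < k) (hkn : k ≤ n)
    -- marginal densities are non-increasing
    (hsort : ∀ i, 1 ≤ i → i < n →
      (V (S (i + 1)) - V (S i)) / b (i + 1) ≤ (V (S i) - V (S (i - 1))) / b i)
    -- proportional-share selection condition with budget B' holds up to k
    (hsel : ∀ i, 1 ≤ i → i ≤ k →
      b i ≤ (V (S i) - V (S (i - 1))) * B' / V (S i))
    -- l is the stopping index for budget B'/2
    (hl1 : 2 * V (S l) / B' ≤ (V (S l) - V (S (l - 1))) / b l)
    (hl2 : (V (S (l + 1)) - V (S l)) / b (l + 1) ≤ 2 * V (S l) / B')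
    -- k is the stopping index for budget B'
    (hk1 : V (S k) / B' ≤ (V (S k) - V (S (k - 1))) / b k) :
    V (S k) / 2 ≤ V (S l) :=
  proportional_share_half_budget_general n V b B' S hB l k hlk hkn hsort hl2 hk1
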